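/- arXiv:2305.16807 — 5 statements merged into one kernel-verified Lean document; each statement's English description precedes it below -/
import Mathlib

section
/- Let $V$ be a real vector space, let $w \in \mathbb{R}$ with $w \neq 1$, and let $\alpha_{t-1}, \alpha_t \in (0,1)$ with $\alpha_{t-1} \neq \alpha_t$. Let $z^*_{t-1}, \epsilon_C', \epsilon_C, \epsilon_\varnothing \in V$. Define the DDIM-inversion step $z^*_t := \sqrt{\alpha_t/\alpha_{t-1}}\, z^*_{t-1} + \sqrt{\alpha_t}\left(\sqrt{1/\alpha_t - 1} - \sqrt{1/\alpha_{t-1} - 1}\right) \epsilon_C'$, set $\bar{z}_t := z^*_t$, define the classifier-free-guidance prediction $\tilde{\epsilon} := \epsilon_\varnothing + w(\epsilon_C - \epsilon_\varnothing)$, and define the DDIM-sampling step $\bar{z}_{t-1} := \sqrt{\alpha_{t-1}/\alpha_t}\, \bar{z}_t + \sqrt{\alpha_{t-1}}\left(\sqrt{1/\alpha_{t-1} - 1} - \sqrt{1/\alpha_t - 1}\right) \tilde{\epsilon}$. Assume the noise-consistency condition $\epsilon_C' = \epsilon_C$. Then $\bar{z}_{t-1} = z^*_{t-1}$ if and only if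 $\epsilon_\varnothing = \epsilon_C$. -/
/-!
Sampling back from `z*_t` with noise `ε̃` lands at `z*_{t-1} + c • (ε̃ - ε_C)`, because the
inversion and sampling steps have reciprocal scale factors and opposite noise coefficients after
rescaling. Here `ε̃ - ε_C = (1 - w) • (ε_∅ - ε_C)`, and `c ≠ 0` since `α ↦ √(1/α - 1)` is injective
on `(0, 1]`.
-/

open Real

noncomputable section

def ddimNoiseCoeff (a b : ℝ) : ℝ := √b * (√(1 / b - 1) - √(1 / a - 1))

/-- The DDIM update from level `a` to level `b`: inversion when `a = α_{t-1}, b = α_t`,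
sampling when `a = α_t, b = α_{t-1}`. -/
def ddimStep {V : Type*} [AddCommGroup V] [Module ℝ V] (a b : ℝ) (z ε : V) : V :=
  √(b / a) • z + ddimNoiseCoeff a b • ε

end

lemma sqrt_div_mul_ddimNoiseCoeff {a b : ℝ} (ha : 0 < a) (hb : 0 < b) :
    √(a / b) * ddimNoiseCoeff a b = -ddimNoiseCoeff b a := by
  rw [ddimNoiseCoeff, ddimNoiseCoeff, sqrt_div ha.le, ← mul_assoc,
    div_mul_cancel₀ _ (by positivity)]
  ring

lemma ddimNoiseCoeff_ne_zero {a b : ℝ} (ha : a ∈ Set.Ioc 0 1) (hb : b ∈ Set.Ioc 0 1)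
    (hab : a ≠ b) : ddimNoiseCoeff a b ≠ 0 := by
  have h1a : 0 ≤ 1 / a - 1 := by rw [sub_nonneg, le_one_div one_pos ha.1]; simpa using ha.2
  have h1b : 0 ≤ 1 / b - 1 := by rw [sub_nonneg, le_one_div one_pos hb.1]; simpa using hb.2
  refine mul_ne_zero (sqrt_ne_zero'.2 hb.1) (sub_ne_zero.2 fun h => hab ?_)
  rw [sqrt_inj h1b h1a, sub_left_inj, one_div, one_div, inv_inj] at h
  exact h.symm

lemma ddimStep_ddimStep {V : Type*} [AddCommGroup V] [Module ℝ V] {a b : ℝ} (ha : 0 < a)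
    (hb : 0 < b) (z ε ε' : V) :
    ddimStep b a (ddimStep a b z ε) ε' = z + ddimNoiseCoeff b a • (ε' - ε) := by
  have hinv : √(a / b) * √(b / a) = 1 := by
    rw [← sqrt_mul (by positivity), div_mul_div_cancel₀ hb.ne', div_self ha.ne', sqrt_one]
  rw [ddimStep, ddimStep, smul_add, smul_smul, smul_smul, hinv,
    sqrt_div_mul_ddimNoiseCoeff ha hb, one_smul, smul_sub, neg_smul, sub_eq_add_neg, add_assoc,
    add_comm (ddimNoiseCoeff b a • ε')]

lemma cfg_sub_cond {V : Type*} [AddCommGroup V] [Module ℝ V] (w : ℝ) (εC εnull : V) :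
    εnull + w • (εC - εnull) - εC = (1 - w) • (εnull - εC) := by
  module

/-- Proposition 2 (optimality of negative-prompt inversion): with the DDIM inversion step
producing `z*_t` from `z*_{t-1}` with noise `εC'`, setting `z̄_t = z*_t`, and the CFG-combined
DDIM sampling step producing `z̄_{t-1}`, under the noise-consistency assumption `εC' = εC`,
one has `z̄_{t-1} = z*_{t-1}` iff `εnull = εC`. -/
theorem negative_prompt_inversion_optimality
    {V : Type*} [AddCommGroup V] [Module ℝ V]
    (w : ℝ) (hw : w ≠ 1)
    (αtm1 αt : ℝ) (hαtm1 : αtm1 ∈ Set.Ioo (0 : ℝ) 1) (hαt : αt ∈ Set.Ioo (0 : ℝ) 1)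
    (hne : αtm1 ≠ αt)
    (zstm1 εC' εC εnull : V)
    (zst zbart εtilde zbartm1 : V)
    (hzst : zst = Real.sqrt (αt / αtm1) • zstm1 +
      (Real.sqrt αt * (Real.sqrt (1 / αt - 1) - Real.sqrt (1 / αtm1 - 1))) • εC')
    (hzbart : zbart = zst)
    (hεtilde : εtilde = εnull + w • (εC - εnull))
    (hzbartm1 : zbartm1 = Real.sqrt (αtm1 / αt) • zbart +
      (Real.sqrt αtm1 * (Real.sqrt (1 / αtm1 - 1) - Real.sqrt (1 / αt - 1))) • εtilde)
    (hnoise : εC' = εC) :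
    zbartm1 = zstm1 ↔ εnull = εC := by
  have hround : zbartm1 = zstm1 + (ddimNoiseCoeff αt αtm1 * (1 - w)) • (εnull - εC) := by
    have h : zbartm1 = ddimStep αt αtm1 (ddimStep αtm1 αt zstm1 εC) εtilde := by
      rw [hzbartm1, hzbart, hzst, hnoise]; rfl
    rw [h, ddimStep_ddimStep hαtm1.1 hαt.1, hεtilde, cfg_sub_cond, smul_smul]
  have hcoeff : ddimNoiseCoeff αt αtm1 * (1 - w) ≠ 0 :=
    mul_ne_zero (ddimNoiseCoeff_ne_zero (Set.Ioo_subset_Ioc_self hαt)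
      (Set.Ioo_subset_Ioc_self hαtm1) hne.symm) (sub_ne_zero.2 (Ne.symm hw))
  rw [hround, add_eq_left, smul_eq_zero, sub_eq_zero, or_iff_right hcoeff]
end

section
/- Let $V$ be a real vector space, $w \in \mathbb{R}$, and $\alpha_{t-1}, \alpha_t \in (0,1)$. Let $z^*_{t-1}, \epsilon_C, \epsilon_\varnothing \in V$. Define $z^*_t := \sqrt{\alpha_t/\alpha_{t-1}}\, z^*_{t-1} + \sqrt{\alpha_t}\left(\sqrt{1/\alpha_t - 1} - \sqrt{1/\alpha_{t-1} - 1}\right) \epsilon_C$ (DDIM inversion step with noise $\epsilon_C$), set $\bar{z}_t := z^*_t$, define $\tilde{\epsilon} := \epsilon_\varnothing + w(\epsilon_C - \epsilon_\varnothing)$, and $\bar{z}_{t-1} := \sqrt{\alpha_{t-1}/\alpha_t}\, \bar{z}_t + \sqrt{\alpha_{t-1}}\left(\sqrt{1/\alpha_{t-1} - 1} - \sqrt{1/\alpha_t - 1}\right) \tilde{\epsilon}$. Then $z^*_{t-1} - \bar{z}_{t-1} = (1-w)\,\sqrt{\alpha_{t-1}}\left(\sqrt{1/\alpha_{t-1}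 - 1} - \sqrt{1/\alpha_t - 1}\right)\left(\epsilon_C - \epsilon_\varnothing\right)$. -/
/-- The expansion identity combined with the CFG reduction in the proof of Proposition 2:
`z*_{t-1} - z̄_{t-1} = (1-w) √α_{t-1}(√(1/α_{t-1}-1) - √(1/α_t-1)) (εC - εnull)`. -/
theorem null_text_inversion_cfg_expansion
    {V : Type*} [AddCommGroup V] [Module ℝ V]
    (w : ℝ)
    (αtm1 αt : ℝ) (hαtm1 : αtm1 ∈ Set.Ioo (0 : ℝ) 1) (hαt : αt ∈ Set.Ioo (0 : ℝ) 1)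
    (zstm1 εC εnull : V)
    (zst zbart εtilde zbartm1 : V)
    (hzst : zst = Real.sqrt (αt / αtm1) • zstm1 +
      (Real.sqrt αt * (Real.sqrt (1 / αt - 1) - Real.sqrt (1 / αtm1 - 1))) • εC)
    (hzbart : zbart = zst)
    (hεtilde : εtilde = εnull + w • (εC - εnull))
    (hzbartm1 : zbartm1 = Real.sqrt (αtm1 / αt) • zbart +
      (Real.sqrt αtm1 * (Real.sqrt (1 / αtm1 - 1) - Real.sqrt (1 / αt - 1))) • εtilde) :
    zstm1 - zbartm1 =
      ((1 - w) * (Real.sqrt αtm1 *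
        (Real.sqrt (1 / αtm1 - 1) - Real.sqrt (1 / αt - 1)))) • (εC - εnull) := by
  obtain ⟨h1, _⟩ := hαtm1
  obtain ⟨h2, _⟩ := hαt
  have s1 : Real.sqrt αtm1 > 0 := Real.sqrt_pos.mpr h1
  have s2 : Real.sqrt αt > 0 := Real.sqrt_pos.mpr h2
  have e1 : Real.sqrt (αt / αtm1) = Real.sqrt αt / Real.sqrt αtm1 :=
    Real.sqrt_div h2.le _
  have e2 : Real.sqrt (αtm1 / αt) = Real.sqrt αtm1 / Real.sqrt αt :=
    Real.sqrt_div h1.le _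
  subst hzbart hεtilde hzst hzbartm1
  rw [e1, e2]
  match_scalars <;> field_simp <;> ring
end

section
/- Let $(\Omega, \mathcal{F}, \mu)$ be a probability space, $m \in \mathbb{N}$, and $\rho_1, \dots, \rho_m \in \mathbb{R}$. Let $X_0, X_1, \dots, X_m$ and $\eta_1, \dots, \eta_m$ be square-integrable real random variables such that: $\mathbb{E}[X_0] = 0$ and $\mathbb{E}[X_0^2] = 1$; for each $i \in \{1, \dots, m\}$, $X_i = \rho_i X_{i-1} + \eta_i$, where $\eta_i$ is independent of the pair $(X_0, X_{i-1})$, $\mathbb{E}[\eta_i] = 0$, and $\mathbb{E}[\eta_i^2] = 1 - \rho_i^2$. Then $\mathbb{E}\left[(X_m - X_0)^2\right] = 2\left(1 - \prod_{i=1}^m \rho_i\right)$. -/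
open MeasureTheory ProbabilityTheory

/-! Since each innovation `η_i` is centred and independent of both `X_0` and `X_{i-1}`, it drops
out of the cross moments: `E[X_i X_0] = ρ_i E[X_{i-1} X_0]`, while `E[X_i²] = ρ_i² E[X_{i-1}²] + (1 - ρ_i²)`
keeps the second moment equal to `1`. Hence `E[X_m X_0] = ∏ ρ_i`, and expanding the square gives
`E[(X_m - X_0)²] = 1 - 2 ∏ ρ_i + 1`. -/

section

variable {Ω : Type*} [MeasurableSpace Ω] {μ : Measure Ω}

lemma ProbabilityTheory.IndepFun.integral_mul_eq_zero {ε Z : Ω → ℝ} (hind : IndepFun ε Z μ)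
    (hε : AEStronglyMeasurable ε μ) (hZ : AEStronglyMeasurable Z μ) (hε0 : ∫ ω, ε ω ∂μ = 0) :
    ∫ ω, ε ω * Z ω ∂μ = 0 := by
  rw [← Pi.mul_def, hind.integral_mul_eq_mul_integral hε hZ, hε0, zero_mul]

lemma integral_sub_sq {Y Z : Ω → ℝ} (hY : MemLp Y 2 μ) (hZ : MemLp Z 2 μ) :
    ∫ ω, (Y ω - Z ω) ^ 2 ∂μ
      = ∫ ω, Y ω ^ 2 ∂μ - 2 * ∫ ω, Y ω * Z ω ∂μ + ∫ ω, Z ω ^ 2 ∂μ := by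
  have hYZ : Integrable (fun ω => 2 * (Y ω * Z ω)) μ := (hY.integrable_mul hZ).const_mul 2
  have hY2 : Integrable (fun ω => Y ω ^ 2 - 2 * (Y ω * Z ω)) μ := hY.integrable_sq.sub hYZ
  simp_rw [sub_sq, mul_assoc]
  rw [integral_add hY2 hZ.integrable_sq, integral_sub hY.integrable_sq hYZ, integral_const_mul]

lemma integral_add_mul_of_indepFun {c : ℝ} {X ε Z : Ω → ℝ} (hX : MemLp X 2 μ) (hε : MemLp ε 2 μ)
    (hZ : MemLp Z 2 μ) (hind : IndepFun ε Z μ) (hε0 : ∫ ω, ε ω ∂μ = 0) :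
    ∫ ω, (c * X ω + ε ω) * Z ω ∂μ = c * ∫ ω, X ω * Z ω ∂μ := by
  have hXZ : Integrable (fun ω => c * (X ω * Z ω)) μ := (hX.integrable_mul hZ).const_mul c
  have hεZ : Integrable (fun ω => ε ω * Z ω) μ := hε.integrable_mul hZ
  simp_rw [add_mul, mul_assoc]
  rw [integral_add hXZ hεZ, integral_const_mul, hind.integral_mul_eq_zero hε.1 hZ.1 hε0, add_zero]

lemma integral_add_sq_of_indepFun {c : ℝ} {X ε : Ω → ℝ} (hX : MemLp X 2 μ) (hε : MemLp ε 2 μ)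
    (hind : IndepFun ε X μ) (hε0 : ∫ ω, ε ω ∂μ = 0) :
    ∫ ω, (c * X ω + ε ω) ^ 2 ∂μ = c ^ 2 * ∫ ω, X ω ^ 2 ∂μ + ∫ ω, ε ω ^ 2 ∂μ := by
  have hεX : ∫ ω, ε ω * X ω ∂μ = 0 := hind.integral_mul_eq_zero hε.1 hX.1 hε0
  have expand : ∀ ω, (c * X ω + ε ω) ^ 2 = c ^ 2 * X ω ^ 2 + 2 * c * (ε ω * X ω) + ε ω ^ 2 :=
    fun ω => by ring
  have hcX : Integrable (fun ω => c ^ 2 * X ω ^ 2) μ := hX.integrable_sq.const_mul _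
  have hεX2 : Integrable (fun ω => 2 * c * (ε ω * X ω)) μ := (hε.integrable_mul hX).const_mul _
  have hsum : Integrable (fun ω => c ^ 2 * X ω ^ 2 + 2 * c * (ε ω * X ω)) μ := hcX.add hεX2
  simp_rw [expand]
  rw [integral_add hsum hε.integrable_sq, integral_add hcX hεX2,
    integral_const_mul, integral_const_mul, hεX, mul_zero, add_zero]

end

theorem ar_process_mean_square_distance_general
    {Ω : Type*} [MeasurableSpace Ω] (μ : Measure Ω) [IsProbabilityMeasure μ]
    (m : ℕ) (ρ : ℕ → ℝ) (X : ℕ → Ω → ℝ) (η : ℕ → Ω → ℝ)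
    (hX2 : ∀ i ≤ m, MemLp (X i) 2 μ)
    (hη2 : ∀ i ∈ Finset.Icc 1 m, MemLp (η i) 2 μ)
    (hX0var : ∫ ω, (X 0 ω) ^ 2 ∂μ = 1)
    (hrec : ∀ i ∈ Finset.Icc 1 m, X i = fun ω => ρ i * X (i - 1) ω + η i ω)
    (hindep : ∀ i ∈ Finset.Icc 1 m,
      IndepFun (η i) (fun ω => (X 0 ω, X (i - 1) ω)) μ)
    (hηmean : ∀ i ∈ Finset.Icc 1 m, ∫ ω, η i ω ∂μ = 0)
    (hηvar : ∀ i ∈ Finset.Icc 1 m, ∫ ω, (η i ω) ^ 2 ∂μ = 1 - (ρ i) ^ 2) :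
    ∫ ω, (X m ω - X 0 ω) ^ 2 ∂μ = 2 * (1 - ∏ i ∈ Finset.Icc 1 m, ρ i) := by
  have moments : ∀ k ≤ m,
      ∫ ω, X k ω ^ 2 ∂μ = 1 ∧ ∫ ω, X k ω * X 0 ω ∂μ = ∏ i ∈ Finset.Icc 1 k, ρ i := by
    intro k hk
    induction k with
    | zero => simp [hX0var, ← sq]
    | succ k ih =>
      have hk1 : k + 1 ∈ Finset.Icc 1 m := Finset.mem_Icc.mpr ⟨k.succ_pos, hk⟩
      obtain ⟨hsq, hcov⟩ := ih (by omega)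
      have hXeq : X (k + 1) = fun ω => ρ (k + 1) * X k ω + η (k + 1) ω := by
        simpa using hrec _ hk1
      have hind : IndepFun (η (k + 1)) (fun ω => (X 0 ω, X k ω)) μ := by
        simpa using hindep _ hk1
      have hXk := hX2 k (by omega)
      simp only [hXeq]
      refine ⟨?_, ?_⟩
      · rw [integral_add_sq_of_indepFun hXk (hη2 _ hk1) (hind.comp measurable_id measurable_snd)
          (hηmean _ hk1), hsq, hηvar _ hk1]
        ring
      · rw [integral_add_mul_of_indepFun hXk (hη2 _ hk1) (hX2 0 m.zero_le)
          (hind.comp measurable_id measurable_fst) (hηmean _ hk1), hcov,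
          Finset.prod_Icc_succ_top (by omega)]
        ring
  obtain ⟨hsq, hcov⟩ := moments m le_rfl
  rw [integral_sub_sq (hX2 m le_rfl) (hX2 0 m.zero_le), hsq, hcov, hX0var]
  ring

/-- Per-coordinate mean-square identity of Proposition 1: for the autoregressive
recursion `X_i = ρ_i X_{i-1} + η_i` with `η_i` independent of `(X_0, X_{i-1})`, zero mean and
variance `1 - ρ_i²`, started from a standardized `X_0`, one has `E[(X_m - X_0)²] = 2(1 - ∏_{i=1}^m ρ_i)`. -/
theorem ar_process_mean_square_distance
    {Ω : Type*} [MeasurableSpace Ω] (μ : Measure Ω) [IsProbabilityMeasure μ]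
    (m : ℕ) (ρ : ℕ → ℝ) (X : ℕ → Ω → ℝ) (η : ℕ → Ω → ℝ)
    (hX2 : ∀ i ≤ m, MemLp (X i) 2 μ)
    (hη2 : ∀ i ∈ Finset.Icc 1 m, MemLp (η i) 2 μ)
    (hX0mean : ∫ ω, X 0 ω ∂μ = 0)
    (hX0var : ∫ ω, (X 0 ω) ^ 2 ∂μ = 1)
    (hrec : ∀ i ∈ Finset.Icc 1 m, X i = fun ω => ρ i * X (i - 1) ω + η i ω)
    (hindep : ∀ i ∈ Finset.Icc 1 m,
      IndepFun (η i) (fun ω => (X 0 ω, X (i - 1) ω)) μ)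
    (hηmean : ∀ i ∈ Finset.Icc 1 m, ∫ ω, η i ω ∂μ = 0)
    (hηvar : ∀ i ∈ Finset.Icc 1 m, ∫ ω, (η i ω) ^ 2 ∂μ = 1 - (ρ i) ^ 2) :
    ∫ ω, (X m ω - X 0 ω) ^ 2 ∂μ = 2 * (1 - ∏ i ∈ Finset.Icc 1 m, ρ i) :=
  ar_process_mean_square_distance_general μ m ρ X η hX2 hη2 hX0var hrec hindep hηmean hηvar
end

section
/- Let $z_0 \in \mathbb{R}$, let $\alpha_{t-1}, \alpha_t \in (0,1)$, and let $\sigma \geq 0$ with $\sigma^2 \leq 1 - \alpha_{t-1}$. Let $Z_t$ and $N$ be independent real random variables on a probability space, with $Z_t$ distributed as the Gaussian $\mathcal{N}(\sqrt{\alpha_t}\, z_0,\, 1-\alpha_t)$ and $N$ distributed as $\mathcal{N}(0,1)$. Then the random variable $Z_{t-1} := \sqrt{\alpha_{t-1}}\, z_0 + \sqrt{1-\alpha_{t-1}-\sigma^2}\, \frac{Z_t - \sqrt{\alpha_t}\, z_0}{\sqrt{1-\alpha_t}} + \sigma N$ is distributed as the Gaussian $\mathcal{N}(\sqrt{\alpha_{t-1}}\,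 z_0,\, 1-\alpha_{t-1})$. -/
/-!
`Z_{t-1}` is an affine combination of the independent Gaussians `Z_t` and `N`, hence Gaussian,
with mean `√α_{t-1} z_0` and variance `(1 - α_{t-1} - σ²) / (1 - α_t) · (1 - α_t) + σ² = 1 - α_{t-1}`.
-/

open MeasureTheory ProbabilityTheory
open scoped NNReal

namespace ProbabilityTheory

variable {Ω : Type*} [MeasurableSpace Ω] {P : Measure Ω}

lemma hasLaw_of_map_eq {𝓧 : Type*} [MeasurableSpace 𝓧] {X : Ω → 𝓧} {ν : Measure 𝓧} [NeZero ν]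
    (hX : P.map X = ν) : HasLaw X ν P :=
  ⟨.of_map_ne_zero (hX ▸ NeZero.ne ν), hX⟩

lemma hasLaw_const_add_mul_add_mul_gaussianReal {X Y : Ω → ℝ} {m₁ m₂ : ℝ} {v₁ v₂ : ℝ≥0}
    (hX : HasLaw X (gaussianReal m₁ v₁) P) (hY : HasLaw Y (gaussianReal m₂ v₂) P)
    (hXY : IndepFun X Y P) (a b c : ℝ) :
    HasLaw (fun ω ↦ a + b * X ω + c * Y ω)
      (gaussianReal (a + b * m₁ + c * m₂)
        (.mk (b ^ 2) (sq_nonneg _) * v₁ + .mk (c ^ 2) (sq_nonneg _) * v₂)) P := by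
  have hbX := gaussianReal_const_add (gaussianReal_const_mul hX b) a
  have hcY := gaussianReal_const_mul hY c
  have hind : IndepFun (fun ω ↦ a + b * X ω) (fun ω ↦ c * Y ω) P :=
    hXY.comp ((measurable_id.const_mul b).const_add a) (measurable_id.const_mul c)
  refine ⟨hbX.aemeasurable.add hcY.aemeasurable, ?_⟩
  rw [add_comm a]
  exact gaussianReal_add_gaussianReal_of_indepFun hind hbX.map_eq hcY.map_eq

end ProbabilityTheory

theorem ddim_forward_marginal_preservation_general
    {Ω : Type*} [MeasurableSpace Ω] (μ : Measure Ω)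
    (z0 : ℝ) (αtm1 αt : ℝ)
    (hαt : αt ∈ Set.Ioo (0 : ℝ) 1)
    (σ : ℝ) (hσ2 : σ ^ 2 ≤ 1 - αtm1)
    (Zt N : Ω → ℝ)
    (hZt : Measure.map Zt μ = gaussianReal (Real.sqrt αt * z0) (1 - αt).toNNReal)
    (hN : Measure.map N μ = gaussianReal 0 1)
    (hindep : IndepFun Zt N μ) :
    Measure.map
        (fun ω => Real.sqrt αtm1 * z0 +
          Real.sqrt (1 - αtm1 - σ ^ 2) * ((Zt ω - Real.sqrt αt * z0) / Real.sqrt (1 - αt)) +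
          σ * N ω) μ
      = gaussianReal (Real.sqrt αtm1 * z0) (1 - αtm1).toNNReal := by
  have hrest : 0 ≤ 1 - αtm1 - σ ^ 2 := by linarith
  have hαt' : 0 < 1 - αt := by linarith [hαt.2]
  have hαtm1 : 0 ≤ 1 - αtm1 := by linarith [sq_nonneg σ]
  set b := Real.sqrt (1 - αtm1 - σ ^ 2) / Real.sqrt (1 - αt)
  have hb : b ^ 2 * (1 - αt) = 1 - αtm1 - σ ^ 2 := by
    rw [div_pow, Real.sq_sqrt hrest, Real.sq_sqrt hαt'.le, div_mul_cancel₀ _ hαt'.ne']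
  have hlaw := hasLaw_const_add_mul_add_mul_gaussianReal (hasLaw_of_map_eq hZt)
    (hasLaw_of_map_eq hN) hindep (Real.sqrt αtm1 * z0 - b * (Real.sqrt αt * z0)) b σ
  convert hlaw.map_eq using 2
  · funext ω
    ring
  · ring
  · ext
    simp [Real.coe_toNNReal _ hαt'.le, Real.coe_toNNReal _ hαtm1, hb]

/-- Coordinatewise marginal preservation of the non-Markovian DDIM forward process:
if `Z_t ~ N(√α_t z_0, 1-α_t)` and `N ~ N(0,1)` are independent, then
`Z_{t-1} = √α_{t-1} z_0 + √(1-α_{t-1}-σ²) (Z_t - √α_t z_0)/√(1-α_t) + σ N` is distributed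
as `N(√α_{t-1} z_0, 1-α_{t-1})`. -/
theorem ddim_forward_marginal_preservation
    {Ω : Type*} [MeasurableSpace Ω] (μ : Measure Ω) [IsProbabilityMeasure μ]
    (z0 : ℝ) (αtm1 αt : ℝ)
    (hαtm1 : αtm1 ∈ Set.Ioo (0 : ℝ) 1) (hαt : αt ∈ Set.Ioo (0 : ℝ) 1)
    (σ : ℝ) (hσ : 0 ≤ σ) (hσ2 : σ ^ 2 ≤ 1 - αtm1)
    (Zt N : Ω → ℝ)
    (hZt : Measure.map Zt μ = gaussianReal (Real.sqrt αt * z0) (1 - αt).toNNReal)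
    (hN : Measure.map N μ = gaussianReal 0 1)
    (hindep : IndepFun Zt N μ) :
    Measure.map
        (fun ω => Real.sqrt αtm1 * z0 +
          Real.sqrt (1 - αtm1 - σ ^ 2) * ((Zt ω - Real.sqrt αt * z0) / Real.sqrt (1 - αt)) +
          σ * N ω) μ
      = gaussianReal (Real.sqrt αtm1 * z0) (1 - αtm1).toNNReal :=
  ddim_forward_marginal_preservation_general μ z0 αtm1 αt hαt σ hσ2 Zt N hZt hN hindep
end

section
/- Let $D \in \mathbb{N}$ and let $p$ be a probability measure on $\mathbb{R}^D$ (with the Borel $\sigma$-algebra). For $z \in \mathbb{R}^D$, $\alpha \in (0,1)$, and $j \in \{1, \dots, D\}$, define $N(z, \alpha) := \int \exp\left(-\frac{\|z - \sqrt{\alpha}\, x\|_2^2}{2(1-\alpha)}\right) dp(x)$ and $M_j(z, \alpha) := \int \frac{z_j - \sqrt{\alpha}\, x_j}{\sqrt{1-\alpha}} \exp\left(-\frac{\|z - \sqrt{\alpha}\, x\|_2^2}{2(1-\alpha)}\right) dp(x)$. Then for each $j$, the function $(z, \alpha) \mapsto M_j(z, \alpha)/N(z, \alpha)$ is continuous on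 $\mathbb{R}^D \times (0,1)$. -/
open MeasureTheory

/-! Both integrands are bounded by `1` uniformly in `(z, α)`: the exponential trivially, and the
numerator's integrand because with `t = |z_j - √α x_j| / √(1 - α)` it is at most `t e^{-t²/2} ≤ 1`.
Dominated convergence against the finite measure `p` then makes numerator and denominator continuous,
and the denominator, an integral of a positive function against a probability measure, never
vanishes. -/

lemma mul_exp_neg_sq_div_two_le_one (t : ℝ) : t * Real.exp (-(t ^ 2 / 2)) ≤ 1 := by
  rw [Real.exp_neg, ← div_eq_mul_inv, div_le_one (Real.exp_pos _)]
  nlinarith [Real.add_one_le_exp (t ^ 2 / 2), sq_nonneg (t - 1)]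

lemma abs_exp_neg_sum_sq_div_le_one {ι : Type*} [Fintype ι] (u : ι → ℝ) {s : ℝ} (hs : 0 ≤ s) :
    |Real.exp (-(∑ k, u k ^ 2) / (2 * s))| ≤ 1 := by
  rw [Real.abs_exp, Real.exp_le_one_iff]
  exact div_nonpos_of_nonpos_of_nonneg (neg_nonpos.2 (by positivity)) (by positivity)

lemma abs_div_sqrt_mul_exp_neg_sum_sq_le_one {ι : Type*} [Fintype ι] (u : ι → ℝ) (j : ι)
    {s : ℝ} (hs : 0 < s) :
    |u j / √s * Real.exp (-(∑ k, u k ^ 2) / (2 * s))| ≤ 1 := by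
  set t := |u j| / √s
  have ht : -(u j ^ 2) / (2 * s) = -(t ^ 2 / 2) := by
    rw [div_pow, sq_abs, Real.sq_sqrt hs.le]
    ring
  have hsum : u j ^ 2 ≤ ∑ k, u k ^ 2 :=
    Finset.single_le_sum (fun k _ => sq_nonneg (u k)) (Finset.mem_univ j)
  calc |u j / √s * Real.exp (-(∑ k, u k ^ 2) / (2 * s))|
      = t * Real.exp (-(∑ k, u k ^ 2) / (2 * s)) := by
        rw [abs_mul, abs_div, abs_of_pos (Real.sqrt_pos.2 hs), Real.abs_exp]
    _ ≤ t * Real.exp (-(u j ^ 2) / (2 * s)) := by gcongr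
    _ = t * Real.exp (-(t ^ 2 / 2)) := by rw [ht]
    _ ≤ 1 := mul_exp_neg_sq_div_two_le_one t

/-- Continuity of the true noise function: the ratio `M_j(z, α) / N(z, α)` of the
posterior-mean noise formula of Proposition 3 is continuous on `ℝ^D × (0,1)`. -/
theorem posterior_noise_continuous
    (D : ℕ) (p : Measure (Fin D → ℝ)) [IsProbabilityMeasure p] (j : Fin D) :
    ContinuousOn
      (fun q : (Fin D → ℝ) × ℝ =>
        (∫ x, (q.1 j - Real.sqrt q.2 * x j) / Real.sqrt (1 - q.2) *
            Real.exp (-(∑ k, (q.1 k - Real.sqrt q.2 * x k) ^ 2) / (2 * (1 - q.2))) ∂p) /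
        (∫ x,
            Real.exp (-(∑ k, (q.1 k - Real.sqrt q.2 * x k) ^ 2) / (2 * (1 - q.2))) ∂p))
      (Set.univ ×ˢ Set.Ioo (0 : ℝ) 1) := by
  have hs : ∀ q ∈ (Set.univ ×ˢ Set.Ioo (0 : ℝ) 1 : Set ((Fin D → ℝ) × ℝ)), 0 < 1 - q.2 :=
    fun q hq => sub_pos.2 hq.2.2
  have hN_bound : ∀ q ∈ (Set.univ ×ˢ Set.Ioo (0 : ℝ) 1 : Set ((Fin D → ℝ) × ℝ)), ∀ x : Fin D → ℝ,
      ‖Real.exp (-(∑ k, (q.1 k - Real.sqrt q.2 * x k) ^ 2) / (2 * (1 - q.2)))‖ ≤ 1 :=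
    fun q hq x => abs_exp_neg_sum_sq_div_le_one (fun k => q.1 k - √q.2 * x k) (hs q hq).le
  refine ContinuousOn.div ?_ ?_ fun q hq => (integral_exp_pos ?_).ne'
  · refine continuousOn_of_dominated (bound := fun _ => 1)
      (fun q _ => (by fun_prop : Continuous _).aestronglyMeasurable)
      (fun q hq => .of_forall fun x => abs_div_sqrt_mul_exp_neg_sum_sq_le_one
        (fun k => q.1 k - √q.2 * x k) j (hs q hq))
      (integrable_const 1) (.of_forall fun x => ?_)
    fun_prop (disch := rintro q ⟨-, -, hq⟩; have := sub_pos.2 hq; positivity)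
  · refine continuousOn_of_dominated (bound := fun _ => 1)
      (fun q _ => (by fun_prop : Continuous _).aestronglyMeasurable)
      (fun q hq => .of_forall (hN_bound q hq)) (integrable_const 1) (.of_forall fun x => ?_)
    fun_prop (disch := rintro q ⟨-, -, hq⟩; have := sub_pos.2 hq; positivity)
  · exact .of_bound (by fun_prop : Continuous _).aestronglyMeasurable 1
      (.of_forall (hN_bound q hq))
end
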